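/- arXiv:0912.4164 — 2 statements merged into one kernel-verified Lean document; each statement's English description precedes it below -/
import Mathlib

section
/- Let X, Y, Z be nonempty closed sets in a proper geodesic metric space M, let D = dom(X, Y) and C = bisect(X, Y). If D and Z are disjoint, then bisect(D, Z) = bisect(C, Z). -/
/-!
By the intermediate value theorem for `infDist · X - infDist · Y`, a geodesic from a point of
`D = dom(X, Y)` to a point outside `D` meets `C = bisect(X, Y)`. Hence outside `D` the distances
to `D` and to `C` agree. Inside `D` neither bisector contains `z`: `infDist z D = 0 < infDist z Z`,
and the geodesic from `z` to a nearest point `w ∈ Z` meets `C` strictly before `w`, so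
`infDist z C < infDist z Z`.
-/

open Metric Set

/-- The bisector of two sets: points equidistant from `X` and `Y`. -/
def bisect {M : Type*} [MetricSpace M] (X Y : Set M) : Set M :=
  {z | infDist z X = infDist z Y}

/-- The dominance region of `X` over `Y`: points at least as close to `X` as to `Y`. -/
def domReg {M : Type*} [MetricSpace M] (X Y : Set M) : Set M :=
  {z | infDist z X ≤ infDist z Y}

/-- A metric space is geodesic if any two distinct points are joined by a metric
segment, i.e. an isometric image of a real interval. -/
def IsGeodesicSpace (M : Type*) [MetricSpace M] : Prop :=
  ∀ x y : M, x ≠ y → ∃ (a b : ℝ) (γ : ℝ → M), a ≤ b ∧ γ a = x ∧ γ b = y ∧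
    ∀ s ∈ Set.Icc a b, ∀ t ∈ Set.Icc a b, dist (γ s) (γ t) = |s - t|

section Bisector

variable {M : Type*} [MetricSpace M] {X Y : Set M}

lemma mem_bisect {z : M} : z ∈ bisect X Y ↔ infDist z X = infDist z Y := Iff.rfl

lemma bisect_subset_domReg : bisect X Y ⊆ domReg X Y := fun _ hz => hz.le

lemma exists_mem_bisect_dist_add_dist_eq (hgeo : IsGeodesicSpace M) {a b : M}
    (ha : a ∈ domReg X Y) (hb : b ∉ domReg X Y) :
    ∃ q ∈ bisect X Y, dist a q + dist q b = dist a b := by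
  obtain ⟨s, t, γ, hst, rfl, rfl, hiso⟩ := hgeo a b (ne_of_mem_of_not_mem ha hb)
  have hγ : ContinuousOn γ (Icc s t) :=
    continuousOn_iff_continuous_domRestrict.2 <| Isometry.continuous <|
      Isometry.of_dist_eq fun u v => (hiso u u.2 v v.2).trans (Real.dist_eq u v).symm
  have hg : ContinuousOn (fun u => infDist (γ u) X - infDist (γ u) Y) (Icc s t) :=
    ((continuous_infDist_pt X).comp_continuousOn hγ).sub
      ((continuous_infDist_pt Y).comp_continuousOn hγ)
  have hzero : (0 : ℝ) ∈ Icc (infDist (γ s) X - infDist (γ s) Y)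
      (infDist (γ t) X - infDist (γ t) Y) :=
    ⟨sub_nonpos.2 ha, sub_nonneg.2 (not_le.1 hb).le⟩
  obtain ⟨u, hu, hgu⟩ := intermediate_value_Icc hst hg hzero
  refine ⟨γ u, sub_eq_zero.1 hgu, ?_⟩
  rw [hiso s (left_mem_Icc.2 hst) u hu, hiso u hu t (right_mem_Icc.2 hst),
    hiso s (left_mem_Icc.2 hst) t (right_mem_Icc.2 hst), abs_of_nonpos (by linarith [hu.1]),
    abs_of_nonpos (by linarith [hu.2]), abs_of_nonpos (by linarith)]
  ring

lemma infDist_domReg_eq_infDist_bisect (hgeo : IsGeodesicSpace M) {z : M}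
    (hz : z ∉ domReg X Y) : infDist z (domReg X Y) = infDist z (bisect X Y) := by
  rcases (domReg X Y).eq_empty_or_nonempty with hD | hDne
  · have hC : bisect X Y = ∅ := subset_empty_iff.1 (hD ▸ bisect_subset_domReg)
    rw [hD, hC]
  obtain ⟨q₀, hq₀, -⟩ := exists_mem_bisect_dist_add_dist_eq hgeo hDne.some_mem hz
  refine le_antisymm (infDist_le_infDist_of_subset bisect_subset_domReg ⟨q₀, hq₀⟩)
    ((le_infDist hDne).2 fun p hp => ?_)
  obtain ⟨q, hq, hpqz⟩ := exists_mem_bisect_dist_add_dist_eq hgeo hp hz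
  calc infDist z (bisect X Y) ≤ dist q z := (infDist_le_dist_of_mem hq).trans_eq (dist_comm z q)
    _ ≤ dist p q + dist q z := le_add_of_nonneg_left dist_nonneg
    _ = dist z p := hpqz.trans (dist_comm p z)

lemma infDist_bisect_lt_infDist [ProperSpace M] (hgeo : IsGeodesicSpace M) {Z : Set M}
    (hZ : Z.Nonempty) (hZcl : IsClosed Z) (hdisj : Disjoint (domReg X Y) Z) {z : M}
    (hz : z ∈ domReg X Y) : infDist z (bisect X Y) < infDist z Z := by
  obtain ⟨w, hw, hzw⟩ := hZcl.exists_infDist_eq_dist hZ z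
  have hwD : w ∉ domReg X Y := hdisj.notMem_of_mem_right hw
  obtain ⟨q, hq, hzqw⟩ := exists_mem_bisect_dist_add_dist_eq hgeo hz hwD
  have hqw : 0 < dist q w := dist_pos.2 fun h => hwD (h ▸ bisect_subset_domReg hq)
  calc infDist z (bisect X Y) ≤ dist z q := infDist_le_dist_of_mem hq
    _ < dist z w := by linarith
    _ = infDist z Z := hzw.symm

end Bisector

theorem bisect_of_dom_eq_bisect_of_bisect_general {M : Type*} [MetricSpace M] [ProperSpace M]
    (hgeo : IsGeodesicSpace M)
    (X Y Z : Set M) (hZ : Z.Nonempty)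
    (hZcl : IsClosed Z)
    (hdisj : Disjoint (domReg X Y) Z) :
    bisect (domReg X Y) Z = bisect (bisect X Y) Z := by
  ext z
  rw [mem_bisect, mem_bisect]
  by_cases hz : z ∈ domReg X Y
  · have hZpos : 0 < infDist z Z :=
      (hZcl.notMem_iff_infDist_pos hZ).1 (hdisj.notMem_of_mem_left hz)
    rw [infDist_zero_of_mem hz]
    exact iff_of_false hZpos.ne (infDist_bisect_lt_infDist hgeo hZ hZcl hdisj hz).ne
  · rw [infDist_domReg_eq_infDist_bisect hgeo hz]

/-- If the dominance region `D = dom(X,Y)` is disjoint from `Z`, then the bisector of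
`D` and `Z` equals the bisector of `C = bisect(X,Y)` and `Z`. -/
theorem bisect_of_dom_eq_bisect_of_bisect {M : Type*} [MetricSpace M] [ProperSpace M]
    (hgeo : IsGeodesicSpace M)
    (X Y Z : Set M) (hX : X.Nonempty) (hY : Y.Nonempty) (hZ : Z.Nonempty)
    (hXcl : IsClosed X) (hYcl : IsClosed Y) (hZcl : IsClosed Z)
    (hdisj : Disjoint (domReg X Y) Z) :
    bisect (domReg X Y) Z = bisect (bisect X Y) Z :=
  bisect_of_dom_eq_bisect_of_bisect_general hgeo X Y Z hZ hZcl hdisj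
end

section
/- Let P and Q be nonempty, disjoint, closed sets in an arbitrary metric space M, let k ≥ 2 be an integer, and let (R_i, S_i)_{i=1}^{k−1} be a k-gradation between R_0 = P and S_k = Q. Then R_i and S_j are disjoint for each pair of indices i, j with 0 ≤ i < j ≤ k. -/
open Metric Set

/-!
Every region of a gradation is closed, being `R 0 = P`, `S k = Q` or a dominance region of
two continuous distance functions. Hence a point `z ∈ R m ∩ S (m + 1)` with `0 < m` has
`infDist z (R (m - 1)) ≤ infDist z (S (m + 1)) = 0`, so `z ∈ R (m - 1) ∩ S m`; symmetrically
`z ∈ R (m + 1) ∩ S (m + 2)`. Thus the sets `R m ∩ S (m + 1)`, `m < k`, all coincide, and the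
common value lies in `R 0 ∩ S k = P ∩ Q = ∅`. Since `R` increases and `S` decreases,
`R i ∩ S j ⊆ R i ∩ S (i + 1)` for `i < j`.
-/

section DominanceRegion

variable {M : Type*} [MetricSpace M] {X Y : Set M} {z : M}

theorem isClosed_domReg (X Y : Set M) : IsClosed (domReg X Y) :=
  isClosed_le (continuous_infDist_pt X) (continuous_infDist_pt Y)

theorem subset_domReg (X Y : Set M) : X ⊆ domReg X Y := fun _ hz =>
  (infDist_zero_of_mem hz).trans_le infDist_nonneg

theorem mem_of_mem_domReg_of_mem (hX : IsClosed X) (hXne : X.Nonempty)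
    (hz : z ∈ domReg X Y) (hzY : z ∈ Y) : z ∈ X :=
  (hX.mem_iff_infDist_zero hXne).2 <|
    le_antisymm (hz.trans (infDist_zero_of_mem hzY).le) infDist_nonneg

end DominanceRegion

/-- `R 0` and `S k` play the roles of `P` and `Q`; indices outside `0 < i < k` are unconstrained. -/
def IsGradation {M : Type*} [MetricSpace M] (k : ℕ) (R S : ℕ → Set M) : Prop :=
  ∀ i, 0 < i → i < k →
    R i = domReg (R (i - 1)) (S (i + 1)) ∧ S i = domReg (S (i + 1)) (R (i - 1))

namespace IsGradation

variable {M : Type*} [MetricSpace M] {k : ℕ} {R S : ℕ → Set M} {a b m : ℕ}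

theorem R_subset_succ (h : IsGradation k R S) (hm : m + 1 < k) : R m ⊆ R (m + 1) := by
  rw [(h (m + 1) m.succ_pos hm).1]
  exact subset_domReg _ _

theorem S_succ_subset (h : IsGradation k R S) (hm0 : 0 < m) (hm : m < k) :
    S (m + 1) ⊆ S m := by
  rw [(h m hm0 hm).2]
  exact subset_domReg _ _

theorem R_subset (h : IsGradation k R S) (hab : a ≤ b) (hb : b < k) : R a ⊆ R b := by
  induction b, hab using Nat.le_induction with
  | base => exact subset_rfl
  | succ n _ ih => exact (ih (by omega)).trans (h.R_subset_succ hb)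

theorem S_subset (h : IsGradation k R S) (ha : 0 < a) (hab : a ≤ b) (hb : b ≤ k) :
    S b ⊆ S a := by
  induction b, hab using Nat.le_induction with
  | base => exact subset_rfl
  | succ n _ ih => exact (h.S_succ_subset (by omega) (by omega)).trans (ih (by omega))

theorem isClosed_R (h : IsGradation k R S) (hR0 : IsClosed (R 0)) (hm : m < k) :
    IsClosed (R m) := by
  rcases Nat.eq_zero_or_pos m with rfl | hm0
  · exact hR0
  · rw [(h m hm0 hm).1]
    exact isClosed_domReg _ _

theorem isClosed_S (h : IsGradation k R S) (hSk : IsClosed (S k)) (hm0 : 0 < m) (hm : m ≤ k) :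
    IsClosed (S m) := by
  rcases hm.eq_or_lt with rfl | hmk
  · exact hSk
  · rw [(h m hm0 hmk).2]
    exact isClosed_domReg _ _

variable (h : IsGradation k R S) (hR0 : IsClosed (R 0)) (hR0ne : (R 0).Nonempty)
  (hSk : IsClosed (S k)) (hSkne : (S k).Nonempty)
include h hR0 hR0ne hSk hSkne

theorem inter_succ_eq (hm : m + 1 < k) :
    R (m + 1) ∩ S (m + 2) = R m ∩ S (m + 1) := by
  have hRm : IsClosed (R m) ∧ (R m).Nonempty :=
    ⟨h.isClosed_R hR0 (by omega), hR0ne.mono (h.R_subset m.zero_le (by omega))⟩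
  have hSm : IsClosed (S (m + 2)) ∧ (S (m + 2)).Nonempty :=
    ⟨h.isClosed_S hSk (by omega) (by omega), hSkne.mono (h.S_subset (by omega) (by omega) le_rfl)⟩
  obtain ⟨hRdom, hSdom⟩ := h (m + 1) m.succ_pos hm
  apply Subset.antisymm
  · rintro z ⟨hzR, hzS⟩
    rw [hRdom] at hzR
    exact ⟨mem_of_mem_domReg_of_mem hRm.1 hRm.2 hzR hzS,
      h.S_succ_subset m.succ_pos hm hzS⟩
  · rintro z ⟨hzR, hzS⟩
    rw [hSdom] at hzS
    exact ⟨h.R_subset_succ hm hzR, mem_of_mem_domReg_of_mem hSm.1 hSm.2 hzS hzR⟩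

theorem inter_eq_inter_zero (hm : m < k) : R m ∩ S (m + 1) = R 0 ∩ S 1 := by
  induction m with
  | zero => rfl
  | succ n ih => rw [h.inter_succ_eq hR0 hR0ne hSk hSkne hm, ih (by omega)]

theorem inter_subset_zero_inter (hm : m < k) : R m ∩ S (m + 1) ⊆ R 0 ∩ S k := by
  have hlast := h.inter_eq_inter_zero hR0 hR0ne hSk hSkne (m := k - 1) (by omega)
  rw [Nat.sub_add_cancel (by omega)] at hlast
  rw [h.inter_eq_inter_zero hR0 hR0ne hSk hSkne hm]
  exact subset_inter inter_subset_left (hlast ▸ inter_subset_right)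

end IsGradation

theorem kgradation_sets_disjoint_general {M : Type*} [MetricSpace M] (k : ℕ)
    (P Q : Set M) (hPne : P.Nonempty) (hQne : Q.Nonempty)
    (hPcl : IsClosed P) (hQcl : IsClosed Q) (hPQ : Disjoint P Q)
    (R S : ℕ → Set M) (hR0 : R 0 = P) (hSk : S k = Q)
    (hgrad : ∀ i, 0 < i → i < k →
      R i = domReg (R (i - 1)) (S (i + 1)) ∧
      S i = domReg (S (i + 1)) (R (i - 1))) :
    ∀ i j, i < j → j ≤ k → Disjoint (R i) (S j) := by
  have h : IsGradation k R S := hgrad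
  subst hR0 hSk
  intro i j hij hjk
  have hS : S j ⊆ S (i + 1) := h.S_subset i.succ_pos hij hjk
  rw [Set.disjoint_iff] at hPQ ⊢
  calc R i ∩ S j ⊆ R i ∩ S (i + 1) := inter_subset_inter_right _ hS
    _ ⊆ R 0 ∩ S k := h.inter_subset_zero_inter hPcl hPne hQcl hQne (by omega)
    _ ⊆ ∅ := hPQ

/-- In a `k`-gradation, `R i` and `S j` are disjoint whenever `0 ≤ i < j ≤ k`. -/
theorem kgradation_sets_disjoint {M : Type*} [MetricSpace M] (k : ℕ) (hk : 2 ≤ k)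
    (P Q : Set M) (hPne : P.Nonempty) (hQne : Q.Nonempty)
    (hPcl : IsClosed P) (hQcl : IsClosed Q) (hPQ : Disjoint P Q)
    (R S : ℕ → Set M) (hR0 : R 0 = P) (hSk : S k = Q)
    (hgrad : ∀ i, 0 < i → i < k →
      R i = domReg (R (i - 1)) (S (i + 1)) ∧
      S i = domReg (S (i + 1)) (R (i - 1))) :
    ∀ i j, i < j → j ≤ k → Disjoint (R i) (S j) :=
  kgradation_sets_disjoint_general k P Q hPne hQne hPcl hQcl hPQ R S hR0 hSk hgrad
end
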